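/- arXiv:1610.02875 — 4 statements merged into one kernel-verified Lean document; each statement's English description precedes it below -/
import Mathlib

section
/- The dimension of the generalized Bergman space A_m^ν(CP^n), given by (2m+n+2ν)·Γ(m+n)Γ(m+n+2ν)/(n Γ(n)² Γ(m+1) Γ(m+2ν+1)), equals the finite sum Σ_{p=0}^{m} Σ_{q=0}^{m+2ν} d(n,p,q), where d(n,p,q) = (p+q+n-1)(p+n-2)!(q+n-2)!/(p! q! (n-1)! (n-2)!), for n ≥ 2, m ≥ 0, 2ν ∈ Z_+. -/
/-!
Write `n = k + 2`. For fixed `p`, the partial sums in `q` of `d(n, p, q)` have a closed form as a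
quotient of factorials (checked by induction on the upper limit), and so do the partial sums in `p`
of those closed forms. At integer arguments the Gamma-function formula is exactly that quotient.
-/

open Real Finset
open scoped Nat

/-- `d(n, p, q)`, the dimension of the space `H(p, q)` of spherical harmonics on `ℂPⁿ`. -/
noncomputable def sphericalHarmonicDim (n p q : ℕ) : ℝ :=
  (((p + q + n - 1 : ℕ) * (p + n - 2).factorial * (q + n - 2).factorial : ℕ) : ℝ) /
    ((p.factorial * q.factorial * (n - 1).factorial * (n - 2).factorial : ℕ) : ℝ)

lemma sphericalHarmonicDim_add_two (k p q : ℕ) :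
    sphericalHarmonicDim (k + 2) p q =
      ((p : ℝ) + q + k + 1) * (p + k)! * (q + k)! / (p ! * q ! * (k + 1)! * k !) := by
  rw [sphericalHarmonicDim, show p + q + (k + 2) - 1 = p + q + k + 1 by omega,
    show p + (k + 2) - 2 = p + k by omega, show q + (k + 2) - 2 = q + k by omega,
    show k + 2 - 1 = k + 1 by omega, show k + 2 - 2 = k by omega]
  push_cast
  ring

lemma sum_range_sphericalHarmonicDim (k p b : ℕ) :
    ∑ q ∈ range (b + 1), sphericalHarmonicDim (k + 2) p q =
      (((k : ℝ) + 2) * (p + k + 1) + (k + 1) * b) * (p + k)! * (b + k + 1)! /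
        (p ! * (k + 1)! * (k + 2)! * b !) := by
  simp only [sphericalHarmonicDim_add_two]
  induction b with
  | zero =>
    simp only [sum_range_one, Nat.cast_zero, Nat.zero_add, Nat.factorial_succ]
    push_cast
    field_simp
    ring
  | succ b ih =>
    rw [sum_range_succ, ih, show b + 1 + k = b + k + 1 by omega]
    simp only [Nat.factorial_succ]
    push_cast
    field_simp
    ring

lemma sum_range_sum_range_sphericalHarmonicDim (k a b : ℕ) :
    ∑ p ∈ range (a + 1), ∑ q ∈ range (b + 1), sphericalHarmonicDim (k + 2) p q =
      ((a : ℝ) + b + k + 2) * (a + k + 1)! * (b + k + 1)! /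
        ((k + 2) * ((k + 1)! : ℝ) ^ 2 * a ! * b !) := by
  simp only [sum_range_sphericalHarmonicDim]
  induction a with
  | zero =>
    simp only [sum_range_one, Nat.cast_zero, Nat.zero_add, Nat.factorial_succ]
    push_cast
    field_simp
    ring
  | succ a ih =>
    rw [sum_range_succ, ih, show a + 1 + k = a + k + 1 by omega]
    simp only [Nat.factorial_succ]
    push_cast
    field_simp
    ring

/-- The dimension of `A_m^ν(ℂPⁿ)`,
`(2m+n+2ν) Γ(m+n) Γ(m+n+2ν) / (n Γ(n)² Γ(m+1) Γ(m+2ν+1))`,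
equals `∑_{p=0}^{m} ∑_{q=0}^{m+2ν} d(n,p,q)` where
`d(n,p,q) = (p+q+n-1)(p+n-2)!(q+n-2)!/(p! q! (n-1)! (n-2)!)`,
for `n ≥ 2`, `m ≥ 0`, `2ν = N ∈ ℤ₊`. -/
theorem dim_generalized_Bergman_space (n m N : ℕ) (hn : 2 ≤ n) :
    ((2 * m + n + N : ℝ) * Real.Gamma (m + n) * Real.Gamma (m + n + N)) /
      (n * Real.Gamma n ^ 2 * Real.Gamma (m + 1) * Real.Gamma (m + N + 1)) =
    ∑ p ∈ Finset.range (m + 1), ∑ q ∈ Finset.range (m + N + 1),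
      (((p + q + n - 1 : ℕ) * (p + n - 2).factorial * (q + n - 2).factorial : ℕ) : ℝ) /
        ((p.factorial * q.factorial * (n - 1).factorial * (n - 2).factorial : ℕ) : ℝ) := by
  obtain ⟨k, rfl⟩ : ∃ k, n = k + 2 := ⟨n - 2, by omega⟩
  have Gamma_eq_factorial (x : ℝ) (j : ℕ) (hx : x = j + 1) : Gamma x = j ! := by
    rw [hx, Real.Gamma_nat_eq_factorial]
  rw [Gamma_eq_factorial (m + (k + 2 : ℕ)) (m + k + 1) (by push_cast; ring),
    Gamma_eq_factorial (m + (k + 2 : ℕ) + N) (m + N + k + 1) (by push_cast; ring),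
    Gamma_eq_factorial (k + 2 : ℕ) (k + 1) (by push_cast; ring),
    Gamma_eq_factorial (m + 1) m rfl,
    Gamma_eq_factorial (m + N + 1) (m + N) (by push_cast; ring)]
  change _ = ∑ p ∈ range (m + 1), ∑ q ∈ range (m + N + 1),
    sphericalHarmonicDim (k + 2) p q
  rw [sum_range_sum_range_sphericalHarmonicDim]
  push_cast
  ring
end

section
/- For every real s, the Weierstrass product identity 1/Γ(s+1) = e^{γ s} ∏_{p≥1} (1 + s/p) e^{−s/p} holds, where γ is the Euler–Mascheroni constant and the infinite product converges. -/
open Filter Finset Real Topology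
open scoped Nat

/-!
The partial products are explicit: for `n ≥ 1` with `n + s + 1 ≠ 0`,
`∏_{p<n} (1 + s/(p+1)) e^{-s/(p+1)} = e^{-s (H_n - log n)} · n/(n+s+1) · (GammaSeq (s+1) n)⁻¹`,
where `GammaSeq (s+1) n = n^(s+1) n! / ((s+1)(s+2)⋯(s+1+n))`. Letting `n → ∞`, Euler's limit
formula `GammaSeq (s+1) n → Γ(s+1)` and `H_n - log n → γ` give the identity. The product converges
absolutely because `(1 + x) e^{-x} = 1 + O(x²)`.
-/

lemma abs_one_add_mul_exp_neg_sub_one_le {x : ℝ} (hx : |x| ≤ 1) :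
    |(1 + x) * exp (-x) - 1| ≤ exp 1 * x ^ 2 := by
  have hexp : exp (-x) ≤ exp 1 := exp_le_exp.mpr (by linarith [neg_abs_le x])
  calc |(1 + x) * exp (-x) - 1| = exp (-x) * |exp x - 1 - x| := by
        rw [← abs_of_pos (exp_pos (-x)), ← abs_mul, abs_of_pos (exp_pos (-x)), ← abs_neg]
        congr 1
        rw [mul_sub, mul_sub, ← exp_add, neg_add_cancel, exp_zero]
        ring
    _ ≤ exp 1 * x ^ 2 :=
        mul_le_mul hexp (abs_exp_sub_one_sub_id_le hx) (abs_nonneg _) (exp_pos 1).le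

lemma multipliable_one_add_mul_exp_neg {ι : Type*} {f : ι → ℝ} (hf : Summable fun i ↦ f i ^ 2) :
    Multipliable fun i ↦ (1 + f i) * exp (-f i) := by
  have hsmall : ∀ᶠ i in cofinite, |f i| ≤ 1 := by
    filter_upwards [hf.tendsto_cofinite_zero.eventually_le_const one_pos] with i hi
    exact (sq_le_one_iff_abs_le_one _).mp hi
  have hsum : Summable fun i ↦ ‖(1 + f i) * exp (-f i) - 1‖ :=
    (hf.mul_left (exp 1)).of_norm_bounded_eventually <| by
      filter_upwards [hsmall] with i hi
      simpa using abs_one_add_mul_exp_neg_sub_one_le hi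
  simpa using multipliable_one_add_of_summable hsum

lemma prod_range_one_add_div_succ (s : ℝ) (n : ℕ) :
    ∏ p ∈ range n, (1 + s / (p + 1)) = (∏ p ∈ range n, (s + 1 + p)) / n ! := by
  rw [← prod_range_add_one_eq_factorial, Nat.cast_prod, ← prod_div_distrib]
  refine prod_congr rfl fun p _ ↦ ?_
  push_cast
  field_simp
  ring

lemma prod_range_exp_neg_div_succ (s : ℝ) (n : ℕ) :
    ∏ p ∈ range n, exp (-s / (p + 1)) = exp (-(s * harmonic n)) := by
  rw [← exp_sum, harmonic, Rat.cast_sum, mul_sum, ← sum_neg_distrib]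
  push_cast
  simp only [div_eq_mul_inv, neg_mul]

lemma inv_GammaSeq_add_one (s : ℝ) (n : ℕ) :
    (GammaSeq (s + 1) n)⁻¹ =
      (∏ p ∈ range n, (s + 1 + p)) * (s + 1 + n) / ((n : ℝ) ^ (s + 1) * n !) := by
  rw [GammaSeq, inv_div, prod_range_succ]

lemma prod_range_one_add_div_mul_exp_neg {s : ℝ} {n : ℕ} (hn : n ≠ 0) (hsn : n + (s + 1) ≠ 0) :
    ∏ p ∈ range n, (1 + s / (p + 1)) * exp (-s / (p + 1)) =
      exp (-s * (harmonic n - log n)) * (n / (n + (s + 1))) * (GammaSeq (s + 1) n)⁻¹ := by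
  have hn₀ : (0 : ℝ) < n := by positivity
  have hexp : exp (-s * (harmonic n - log n)) = exp (-(s * harmonic n)) * (n : ℝ) ^ s := by
    rw [rpow_def_of_pos hn₀, ← exp_add]
    ring_nf
  rw [prod_mul_distrib, prod_range_one_add_div_succ, prod_range_exp_neg_div_succ,
    inv_GammaSeq_add_one, hexp, rpow_add hn₀, rpow_one]
  field_simp
  ring

lemma tendsto_inv_GammaSeq (s : ℝ) :
    Tendsto (fun n ↦ (GammaSeq s n)⁻¹) atTop (𝓝 (Gamma s)⁻¹) := by
  -- Inversion is discontinuous at the poles, but there `GammaSeq s` is eventually `0`.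
  by_cases hΓ : Gamma s = 0
  · obtain ⟨m, rfl⟩ := (Gamma_eq_zero_iff s).mp hΓ
    rw [hΓ, inv_zero]
    refine tendsto_const_nhds.congr' ?_
    filter_upwards [eventually_ge_atTop m] with n hn
    rw [GammaSeq, prod_eq_zero (mem_range.mpr (Nat.lt_succ_of_le hn)) (neg_add_cancel _),
      div_zero, inv_zero]
  · exact (GammaSeq_tendsto_Gamma s).inv₀ hΓ

lemma tendsto_prod_range_one_add_div_mul_exp_neg (s : ℝ) :
    Tendsto (fun n ↦ ∏ p ∈ range n, (1 + s / (p + 1)) * exp (-s / (p + 1))) atTop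
      (𝓝 (exp (-s * eulerMascheroniConstant) * (Gamma (s + 1))⁻¹)) := by
  have hexp := (tendsto_harmonic_sub_log.const_mul (-s)).rexp
  have hfrac := tendsto_natCast_div_add_atTop (s + 1)
  have hlim := (hexp.mul hfrac).mul (tendsto_inv_GammaSeq (s + 1))
  rw [mul_one] at hlim
  refine hlim.congr' ?_
  filter_upwards [eventually_ne_atTop 0, eventually_gt_atTop ⌈-(s + 1)⌉₊] with n hn hsn
  refine (prod_range_one_add_div_mul_exp_neg hn ?_).symm
  have := Nat.lt_of_ceil_lt hsn
  linarith

lemma multipliable_one_add_div_succ_mul_exp_neg (s : ℝ) :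
    Multipliable fun p : ℕ ↦ (1 + s / (p + 1)) * exp (-s / (p + 1)) := by
  have hsq : Summable fun p : ℕ ↦ (s / (p + 1)) ^ 2 := by
    have h := (summable_nat_add_iff 1).mpr (summable_one_div_nat_pow.mpr one_lt_two)
    refine (h.mul_left (s ^ 2)).congr fun p ↦ ?_
    push_cast
    rw [div_pow, mul_one_div]
  simpa only [neg_div] using multipliable_one_add_mul_exp_neg hsq

/-- the Weierstrass product
`1/Γ(s+1) = e^{γs} ∏_{p≥1} (1 + s/p) e^{−s/p}` for every real `s`,
where `γ` is the Euler–Mascheroni constant, and the product converges. -/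
theorem weierstrass_product_gamma (s : ℝ) :
    Multipliable (fun p : ℕ => (1 + s / (p + 1)) * Real.exp (-s / (p + 1))) ∧
    1 / Real.Gamma (s + 1) =
      Real.exp (Real.eulerMascheroniConstant * s) *
        ∏' p : ℕ, (1 + s / (p + 1)) * Real.exp (-s / (p + 1)) := by
  have hmul := multipliable_one_add_div_succ_mul_exp_neg s
  refine ⟨hmul, ?_⟩
  rw [tendsto_nhds_unique hmul.tendsto_prod_tprod_nat
    (tendsto_prod_range_one_add_div_mul_exp_neg s), ← mul_assoc, ← exp_add]
  simp only [one_div, mul_comm, mul_neg, add_neg_cancel, exp_zero, one_mul]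
end

section
/- For every nonnegative integer ν' = 2ν and nonnegative integer k ≤ 2ν, one has 1/(Γ(2ν−k+1) Γ(k+2ν+2)) = 1/(Γ(2ν+1) Γ(2ν+2)) · ∏_{p≥1} (1 − k(k+1)/((p+2ν)(p+2ν+1))), where the infinite product converges. -/
open Filter Finset Real Nat Topology

private lemma aux_fact_le_pow_mul (n k : ℕ) : (n + k)! ≤ n ! * (n + k) ^ k := by
  induction k with
  | zero => simp
  | succ k ih =>
    have h1 : (n + (k+1))! = (n + k)! * (n + k + 1) := by
      rw [show n + (k+1) = (n + k) + 1 from rfl, Nat.factorial_succ]; ring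
    calc (n + (k+1))! = (n + k)! * (n + k + 1) := h1
      _ ≤ (n ! * (n + k) ^ k) * (n + k + 1) := Nat.mul_le_mul_right _ ih
      _ ≤ (n ! * (n + k + 1) ^ k) * (n + k + 1) := by
          exact Nat.mul_le_mul_right _ (Nat.mul_le_mul_left _
            (Nat.pow_le_pow_left (Nat.le_succ _) _))
      _ = n ! * (n + (k+1)) ^ (k+1) := by ring_nf

private lemma aux_fact_mul_fact_le (n q k : ℕ) (h : q ≤ n) :
    n ! * (q + k)! ≤ (n + k)! * q ! := by
  induction k with
  | zero => simp
  | succ k ih =>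
    have h1 : (q + (k+1))! = (q + k)! * (q + k + 1) := by
      rw [show q + (k+1) = (q + k) + 1 from rfl, Nat.factorial_succ]; ring
    have h2 : (n + (k+1))! = (n + k)! * (n + k + 1) := by
      rw [show n + (k+1) = (n + k) + 1 from rfl, Nat.factorial_succ]; ring
    calc n ! * (q + (k+1))! = (n ! * (q + k)!) * (q + k + 1) := by rw [h1]; ring
      _ ≤ ((n + k)! * q !) * (q + k + 1) := Nat.mul_le_mul_right _ ih
      _ ≤ ((n + k)! * q !) * (n + k + 1) := Nat.mul_le_mul_left _ (by omega)
      _ = (n + (k+1))! * q ! := by rw [h2]; ring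

private lemma aux_partial_prod (k m : ℕ) (M : ℕ) :
    ∏ p ∈ Finset.range M,
      (1 - ((k : ℝ) * (k + 1)) / (((p : ℝ) + 1 + ((k : ℝ) + m)) * ((p : ℝ) + 1 + ((k : ℝ) + m) + 1)))
    = (((M + m)! : ℝ) * ((M + 2*k + m + 1)! : ℝ) * ((k + m)! : ℝ) * ((k + m + 1)! : ℝ)) /
      ((m ! : ℝ) * ((2*k + m + 1)! : ℝ) * ((M + k + m)! : ℝ) * ((M + k + m + 1)! : ℝ)) := by
  induction M with
  | zero =>
    simp only [Finset.range_zero, Finset.prod_empty, Nat.zero_add, zero_add]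
    rw [div_self]
    positivity
  | succ M ih =>
    rw [Finset.prod_range_succ, ih]
    have e1 : ((M + 1 + m)! : ℝ) = ((M + m)! : ℝ) * ((M : ℝ) + m + 1) := by
      rw [show M + 1 + m = (M + m) + 1 by ring, Nat.factorial_succ]
      push_cast; ring
    have e2 : ((M + 1 + 2*k + m + 1)! : ℝ) = ((M + 2*k + m + 1)! : ℝ) * ((M : ℝ) + 2*k + m + 2) := by
      rw [show M + 1 + 2*k + m + 1 = (M + 2*k + m + 1) + 1 by ring, Nat.factorial_succ]
      push_cast; ring
    have e3 : ((M + 1 + k + m)! : ℝ) = ((M + k + m)! : ℝ) * ((M : ℝ) + k + m + 1) := by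
      rw [show M + 1 + k + m = (M + k + m) + 1 by ring, Nat.factorial_succ]
      push_cast; ring
    have e4 : ((M + 1 + k + m + 1)! : ℝ) = ((M + k + m + 1)! : ℝ) * ((M : ℝ) + k + m + 2) := by
      rw [show M + 1 + k + m + 1 = (M + k + m + 1) + 1 by ring, Nat.factorial_succ]
      push_cast; ring
    rw [e1, e2, e3, e4]
    have hf1 : (m ! : ℝ) ≠ 0 := Nat.cast_ne_zero.mpr (Nat.factorial_ne_zero _)
    have hf2 : (((2*k + m + 1)!) : ℝ) ≠ 0 := Nat.cast_ne_zero.mpr (Nat.factorial_ne_zero _)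
    have hf3 : (((M + k + m)!) : ℝ) ≠ 0 := Nat.cast_ne_zero.mpr (Nat.factorial_ne_zero _)
    have hf4 : (((M + k + m + 1)!) : ℝ) ≠ 0 := Nat.cast_ne_zero.mpr (Nat.factorial_ne_zero _)
    have hd1 : ((M : ℝ) + k + m + 1) ≠ 0 := by positivity
    have hd2 : ((M : ℝ) + k + m + 2) ≠ 0 := by positivity
    have hd3 : ((M : ℝ) + 1 + ((k : ℝ) + m)) ≠ 0 := by positivity
    have hd4 : ((M : ℝ) + 1 + ((k : ℝ) + m) + 1) ≠ 0 := by positivity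
    field_simp
    ring

/-- for `N = 2ν` a nonnegative integer and `0 ≤ k ≤ 2ν`,
`1/(Γ(2ν−k+1) Γ(k+2ν+2))
  = 1/(Γ(2ν+1) Γ(2ν+2)) ∏_{p≥1} (1 − k(k+1)/((p+2ν)(p+2ν+1)))`,
where the infinite product converges. -/
theorem gamma_ratio_product (N k : ℕ) (hk : k ≤ N) :
    Multipliable (fun p : ℕ =>
      1 - ((k : ℝ) * (k + 1)) / (((p : ℝ) + 1 + N) * ((p : ℝ) + 1 + N + 1))) ∧
    1 / (Real.Gamma ((N : ℝ) - k + 1) * Real.Gamma ((k : ℝ) + N + 2)) =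
      1 / (Real.Gamma ((N : ℝ) + 1) * Real.Gamma ((N : ℝ) + 2)) *
        ∏' p : ℕ, (1 - ((k : ℝ) * (k + 1)) / (((p : ℝ) + 1 + N) * ((p : ℝ) + 1 + N + 1))) := by
  obtain ⟨m, rfl⟩ : ∃ m, N = k + m := ⟨N - k, (Nat.add_sub_cancel' hk).symm⟩
  set f : ℕ → ℝ := fun p => 1 - ((k : ℝ) * (k + 1)) /
    (((p : ℝ) + 1 + ((k + m : ℕ) : ℝ)) * ((p : ℝ) + 1 + ((k + m : ℕ) : ℝ) + 1)) with hf_def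
  -- positivity and bounds on the factors
  have hxle : ∀ p : ℕ, ((k : ℝ) * (k + 1)) /
      (((p : ℝ) + 1 + ((k + m : ℕ) : ℝ)) * ((p : ℝ) + 1 + ((k + m : ℕ) : ℝ) + 1))
        ≤ (k : ℝ) / ((k : ℝ) + m + 2) := by
    intro p
    have hp : (0:ℝ) ≤ p := Nat.cast_nonneg p
    have hden : (0:ℝ) < ((p : ℝ) + 1 + ((k + m : ℕ) : ℝ)) * ((p : ℝ) + 1 + ((k + m : ℕ) : ℝ) + 1) := by
      positivity
    have hden2 : (0:ℝ) < (k : ℝ) + m + 2 := by positivity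
    rw [div_le_div_iff₀ hden hden2]
    have hkn : (0:ℝ) ≤ (k:ℝ) := Nat.cast_nonneg k
    have hmn : (0:ℝ) ≤ (m:ℝ) := Nat.cast_nonneg m
    push_cast
    nlinarith [mul_nonneg hp hkn, mul_nonneg hp hmn, mul_nonneg hkn hmn, sq_nonneg ((p:ℝ)),
      mul_nonneg (mul_nonneg hp hkn) hmn, mul_nonneg (mul_nonneg hp hkn) hp,
      mul_nonneg (mul_nonneg hkn hkn) hmn, mul_nonneg (mul_nonneg hkn hmn) hmn,
      mul_nonneg (mul_nonneg hp hkn) hkn, mul_nonneg (mul_nonneg hp hmn) hmn]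
  have hxnn : ∀ p : ℕ, 0 ≤ ((k : ℝ) * (k + 1)) /
      (((p : ℝ) + 1 + ((k + m : ℕ) : ℝ)) * ((p : ℝ) + 1 + ((k + m : ℕ) : ℝ) + 1)) := by
    intro p; positivity
  have hclb : (0:ℝ) < 1 - (k : ℝ) / ((k : ℝ) + m + 2) := by
    have : (k : ℝ) / ((k : ℝ) + m + 2) < 1 := by
      rw [div_lt_one (by positivity)]; linarith [Nat.cast_nonneg (α := ℝ) m]
    linarith
  have hfpos : ∀ p : ℕ, 0 < f p := fun p => by
    have := hxle p; simp only [hf_def]; linarith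
  have hfle1 : ∀ p : ℕ, f p ≤ 1 := fun p => by
    have := hxnn p; simp only [hf_def]; linarith
  -- summability of logs
  have hsumx : Summable (fun p : ℕ => ((k : ℝ) * (k + 1)) /
      (((p : ℝ) + 1 + ((k + m : ℕ) : ℝ)) * ((p : ℝ) + 1 + ((k + m : ℕ) : ℝ) + 1))) := by
    have hbase : Summable (fun n : ℕ => 1 / (n : ℝ) ^ 2) :=
      summable_one_div_nat_pow.mpr (by norm_num)
    have hs1 : Summable (fun p : ℕ => ((k : ℝ) * (k + 1)) * (1 / ((p : ℝ) + 1) ^ 2)) := by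
      apply Summable.mul_left
      have := (summable_nat_add_iff 1).mpr hbase
      refine this.congr fun p => ?_
      push_cast; ring
    refine Summable.of_nonneg_of_le hxnn (fun p => ?_) hs1
    have hp : (0:ℝ) ≤ p := Nat.cast_nonneg p
    have hd2 : (0:ℝ) < ((p : ℝ) + 1) ^ 2 := by positivity
    rw [mul_one_div]
    have hkn : (0:ℝ) ≤ (k:ℝ) := Nat.cast_nonneg k
    have hmn : (0:ℝ) ≤ (m:ℝ) := Nat.cast_nonneg m
    have hkk : (0:ℝ) ≤ (k:ℝ) * ((k:ℝ) + 1) := by positivity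
    refine div_le_div_of_nonneg_left hkk hd2 ?_
    push_cast
    nlinarith [mul_nonneg hp hkn, mul_nonneg hp hmn, mul_nonneg hkn hmn]
  have hsumlog : Summable fun p : ℕ => Real.log (f p) := by
    have hc : (0:ℝ) < 1 - (k : ℝ) / ((k : ℝ) + m + 2) := hclb
    have key : Summable fun p : ℕ => -Real.log (f p) := by
      refine Summable.of_nonneg_of_le (fun p => ?_) (fun p => ?_)
        (hsumx.mul_left (1 / (1 - (k : ℝ) / ((k : ℝ) + m + 2))))
      · have := Real.log_nonpos (le_of_lt (hfpos p)) (hfle1 p)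
        linarith
      · have hlog : -Real.log (f p) = Real.log (1 / f p) := by
          rw [Real.log_div one_ne_zero (ne_of_gt (hfpos p)), Real.log_one]; ring
        have hb : Real.log (1 / f p) ≤ 1 / f p - 1 :=
          Real.log_le_sub_one_of_pos (one_div_pos.mpr (hfpos p))
        have hfl : 1 - (k : ℝ) / ((k : ℝ) + m + 2) ≤ f p := by
          have := hxle p; simp only [hf_def]; linarith
        have hne : f p ≠ 0 := (hfpos p).ne'
        have h1 : 1 / f p - 1 = (1 - f p) / f p := by
          field_simp
        have h2 : (1 - f p) / f p ≤ (1 - f p) / (1 - (k : ℝ) / ((k : ℝ) + m + 2)) := by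
          apply div_le_div_of_nonneg_left _ hc hfl
          · have := hfle1 p; linarith
        have h3 : (1 - f p) = ((k : ℝ) * (k + 1)) /
            (((p : ℝ) + 1 + ((k + m : ℕ) : ℝ)) * ((p : ℝ) + 1 + ((k + m : ℕ) : ℝ) + 1)) := by
          simp only [hf_def]; ring
        rw [hlog]
        calc Real.log (1 / f p) ≤ 1 / f p - 1 := hb
          _ = (1 - f p) / f p := h1
          _ ≤ (1 - f p) / (1 - (k : ℝ) / ((k : ℝ) + m + 2)) := h2
          _ = 1 / (1 - (k : ℝ) / ((k : ℝ) + m + 2)) * ((k : ℝ) * (k + 1) /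
              (((p : ℝ) + 1 + ((k + m : ℕ) : ℝ)) * ((p : ℝ) + 1 + ((k + m : ℕ) : ℝ) + 1))) := by
            rw [h3]; ring
    have := key.neg
    simpa using this
  have hmult : Multipliable f := by
    exact Real.multipliable_of_summable_log hfpos hsumlog
  -- the limit of the partial products
  set L : ℝ := (((k + m)! : ℝ) * ((k + m + 1)! : ℝ)) / ((m ! : ℝ) * ((2*k + m + 1)! : ℝ)) with hL
  have hBtendsto : Tendsto (fun M : ℕ => (((M + m)! : ℝ) * ((M + 2*k + m + 1)! : ℝ)) /
      (((M + k + m)! : ℝ) * ((M + k + m + 1)! : ℝ))) atTop (𝓝 1) := by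
    set B : ℕ → ℝ := fun M => (((M + m)! : ℝ) * ((M + 2*k + m + 1)! : ℝ)) /
      (((M + k + m)! : ℝ) * ((M + k + m + 1)! : ℝ)) with hB
    have hlow : ∀ M : ℕ, (1:ℝ) ≤ B M := by
      intro M
      have hden : (0:ℝ) < ((M + k + m)! : ℝ) * ((M + k + m + 1)! : ℝ) := by positivity
      rw [hB, one_le_div hden]
      have h2 : (M + k + m + 1)! * ((M + m) + k)! ≤ ((M + k + m + 1) + k)! * (M + m)! :=
        aux_fact_mul_fact_le (M + k + m + 1) (M + m) k (by omega)
      have h3 : (M + k + m + 1)! * (M + k + m)! ≤ (M + 2*k + m + 1)! * (M + m)! := by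
        rw [show M + m + k = M + k + m from by omega,
            show M + k + m + 1 + k = M + 2*k + m + 1 from by omega] at h2
        exact h2
      calc ((M + k + m)! : ℝ) * ((M + k + m + 1)! : ℝ)
          = (((M + k + m + 1)! * (M + k + m)! : ℕ) : ℝ) := by push_cast; ring
        _ ≤ (((M + 2*k + m + 1)! * (M + m)! : ℕ) : ℝ) := by exact_mod_cast Nat.cast_le.mpr h3
        _ = ((M + m)! : ℝ) * ((M + 2*k + m + 1)! : ℝ) := by push_cast; ring
    have hup : ∀ M : ℕ, B M ≤ (((M : ℝ) + 2*k + m + 1) / ((M : ℝ) + m + 1)) ^ k := by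
      intro M
      have hnum : ((M + 2*k + m + 1)! : ℝ) ≤ ((M + k + m + 1)! : ℝ) * ((M : ℝ) + 2*k + m + 1) ^ k := by
        have := aux_fact_le_pow_mul (M + k + m + 1) k
        have h2 : (M + 2*k + m + 1)! ≤ (M + k + m + 1)! * (M + 2*k + m + 1) ^ k := by
          rw [show M + k + m + 1 + k = M + 2*k + m + 1 from by omega] at this
          exact this
        calc ((M + 2*k + m + 1)! : ℝ) ≤ (((M + k + m + 1)! * (M + 2*k + m + 1) ^ k : ℕ) : ℝ) := by
              exact_mod_cast h2
          _ = ((M + k + m + 1)! : ℝ) * ((M : ℝ) + 2*k + m + 1) ^ k := by push_cast; ring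
      have hden : ((M + m)! : ℝ) * ((M : ℝ) + m + 1) ^ k ≤ ((M + k + m)! : ℝ) := by
        have := Nat.factorial_mul_pow_le_factorial (m := M + m) (n := k)
        have h2 : (M + m)! * (M + m + 1) ^ k ≤ (M + k + m)! := by
          rw [show M + m + k = M + k + m from by omega] at this
          exact this
        calc ((M + m)! : ℝ) * ((M : ℝ) + m + 1) ^ k
            = (((M + m)! * (M + m + 1) ^ k : ℕ) : ℝ) := by push_cast; ring
          _ ≤ ((M + k + m)! : ℝ) := by exact_mod_cast h2
      have step : B M ≤ (((M + m)! : ℝ) * (((M + k + m + 1)! : ℝ) * ((M : ℝ) + 2*k + m + 1) ^ k)) /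
          ((((M + m)! : ℝ) * ((M : ℝ) + m + 1) ^ k) * ((M + k + m + 1)! : ℝ)) := by
        rw [hB]
        apply div_le_div₀ (by positivity)
        · exact mul_le_mul_of_nonneg_left hnum (by positivity)
        · positivity
        · exact mul_le_mul_of_nonneg_right hden (by positivity)
      refine step.trans (le_of_eq ?_)
      rw [div_pow]
      have hff : ((M + m)! : ℝ) ≠ 0 := Nat.cast_ne_zero.mpr (Nat.factorial_ne_zero _)
      have hff2 : ((M + k + m + 1)! : ℝ) ≠ 0 := Nat.cast_ne_zero.mpr (Nat.factorial_ne_zero _)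
      have hp1 : ((M : ℝ) + m + 1) ^ k ≠ 0 := by positivity
      field_simp
    have hUtendsto : Tendsto (fun M : ℕ => (((M : ℝ) + 2*k + m + 1) / ((M : ℝ) + m + 1)) ^ k)
        atTop (𝓝 1) := by
      have h1 : Tendsto (fun M : ℕ => ((M : ℝ) + 2*k + m + 1) / ((M : ℝ) + m + 1)) atTop (𝓝 1) := by
        have heq : ∀ M : ℕ, ((M : ℝ) + 2*k + m + 1) / ((M : ℝ) + m + 1)
            = 1 + (2*k : ℝ) / ((M : ℝ) + m + 1) := by
          intro M
          have hne : ((M : ℝ) + m + 1) ≠ 0 := by positivity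
          field_simp
          ring
        have hden : Tendsto (fun M : ℕ => ((M : ℝ) + m + 1)) atTop atTop := by
          have := tendsto_atTop_add_const_right atTop ((m:ℝ) + 1)
            (tendsto_natCast_atTop_atTop (R := ℝ))
          exact this.congr fun M => by ring
        have h0 : Tendsto (fun M : ℕ => (2*k : ℝ) / ((M : ℝ) + m + 1)) atTop (𝓝 0) :=
          tendsto_const_nhds.div_atTop hden
        have := h0.const_add (1 : ℝ)
        simp only [add_zero] at this
        exact (this.congr fun M => (heq M).symm)
      have := h1.pow k
      simpa using this
    exact tendsto_of_tendsto_of_tendsto_of_le_of_le tendsto_const_nhds hUtendsto hlow hup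
  have hPtendsto : Tendsto (fun M : ℕ => ∏ p ∈ Finset.range M, f p) atTop (𝓝 L) := by
    have heq : ∀ M : ℕ, ∏ p ∈ Finset.range M, f p =
        ((((M + m)! : ℝ) * ((M + 2*k + m + 1)! : ℝ)) /
          (((M + k + m)! : ℝ) * ((M + k + m + 1)! : ℝ))) * L := by
      intro M
      rw [hf_def]
      push_cast
      rw [aux_partial_prod k m M, hL]
      have h1 : ((m !) : ℝ) ≠ 0 := Nat.cast_ne_zero.mpr (Nat.factorial_ne_zero _)
      have h2 : (((2*k + m + 1)!) : ℝ) ≠ 0 := Nat.cast_ne_zero.mpr (Nat.factorial_ne_zero _)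
      have h3 : (((M + k + m)!) : ℝ) ≠ 0 := Nat.cast_ne_zero.mpr (Nat.factorial_ne_zero _)
      have h4 : (((M + k + m + 1)!) : ℝ) ≠ 0 := Nat.cast_ne_zero.mpr (Nat.factorial_ne_zero _)
      field_simp
    have := hBtendsto.mul_const L
    rw [one_mul] at this
    exact this.congr fun M => (heq M).symm
  have hHasProd : HasProd f L := (hmult.hasProd_iff_tendsto_nat).mpr hPtendsto
  have htprod : ∏' p, f p = L := hHasProd.tprod_eq
  refine ⟨hmult, ?_⟩
  rw [htprod]
  have g1 : Real.Gamma (((k + m : ℕ) : ℝ) - (k : ℕ) + 1) = (m ! : ℝ) := by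
    have h : ((k + m : ℕ) : ℝ) - (k : ℕ) + 1 = ((m : ℕ) : ℝ) + 1 := by push_cast; ring
    rw [h, Real.Gamma_nat_eq_factorial]
  have g2 : Real.Gamma ((k : ℝ) + ((k + m : ℕ) : ℝ) + 2) = (((2*k + m + 1)!) : ℝ) := by
    have h : (k : ℝ) + ((k + m : ℕ) : ℝ) + 2 = ((2*k + m + 1 : ℕ) : ℝ) + 1 := by push_cast; ring
    rw [h, Real.Gamma_nat_eq_factorial]
  have g3 : Real.Gamma (((k + m : ℕ) : ℝ) + 1) = (((k + m)!) : ℝ) := by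
    rw [Real.Gamma_nat_eq_factorial]
  have g4 : Real.Gamma (((k + m : ℕ) : ℝ) + 2) = (((k + m + 1)!) : ℝ) := by
    have h : ((k + m : ℕ) : ℝ) + 2 = ((k + m + 1 : ℕ) : ℝ) + 1 := by push_cast; ring
    rw [h, Real.Gamma_nat_eq_factorial]
  rw [g1, g2, g3, g4, hL]
  have h1 : ((m !) : ℝ) ≠ 0 := Nat.cast_ne_zero.mpr (Nat.factorial_ne_zero _)
  have h2 : (((2*k + m + 1)!) : ℝ) ≠ 0 := Nat.cast_ne_zero.mpr (Nat.factorial_ne_zero _)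
  have h3 : (((k + m)!) : ℝ) ≠ 0 := Nat.cast_ne_zero.mpr (Nat.factorial_ne_zero _)
  have h4 : (((k + m + 1)!) : ℝ) ≠ 0 := Nat.cast_ne_zero.mpr (Nat.factorial_ne_zero _)
  field_simp
end

section
/- Define W(λ) = ∏_{p≥1} (1 − λ/((p+2ν)(p+2ν+1))) for λ ≥ 0 and fixed real ν ≥ 0. Then the infinite product converges absolutely for every λ ≥ 0, and W(k(k+1)) = Γ(2ν+1)Γ(2ν+2)/(Γ(2ν−k+1)Γ(2ν+k+2)) for every integer k with 0 ≤ k ≤ 2ν (2ν a nonnegative integer). -/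
/-!
With `m = p + N + 1`, the factor `1 - k(k+1)/(m(m+1))` equals `(m-k)(m+k+1)/(m(m+1))`, so the
product has the shape `∏ (a+p)(b+p)/((c+p)(d+p))` with `a + b = c + d`. Writing each partial product
through Euler's sequence `Γₙ(s) = nˢ n!/(s(s+1)⋯(s+n)) → Γ(s)`, the powers `n^(a+b) = n^(c+d)`
cancel and the limit is `Γ(c)Γ(d)/(Γ(a)Γ(b))`. Convergence for every `λ` follows from the
summability of `λ/(m(m+1))`.
-/

open Filter Finset Topology Real Nat

lemma multipliable_one_sub_div_mul_add_one (lam : ℝ) {c : ℝ} (hc : 0 < c) :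
    Multipliable fun p : ℕ => 1 - lam / ((p + c) * (p + c + 1)) := by
  have hsq : Summable fun p : ℕ => |lam| * (1 / |p + c| ^ (2 : ℝ)) :=
    ((summable_one_div_nat_add_rpow c 2).mpr one_lt_two).mul_left _
  have hsum : Summable fun p : ℕ => -(lam / ((p + c) * (p + c + 1))) := by
    refine (hsq.of_norm_bounded fun p => ?_).neg
    have hp : 0 < (p : ℝ) + c := by positivity
    rw [abs_of_pos hp, rpow_two, Real.norm_eq_abs, abs_div,
      abs_of_pos (mul_pos hp (by linarith) : 0 < ((p : ℝ) + c) * (p + c + 1)),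
      div_eq_mul_one_div |lam|]
    gcongr
    nlinarith
  simpa only [sub_eq_add_neg] using Real.multipliable_one_add_of_summable hsum

namespace Real

lemma GammaSeq_mul_prod_range {s : ℝ} (hs : 0 < s) (n : ℕ) :
    GammaSeq s n * ∏ j ∈ range (n + 1), (s + j) = n ^ s * n ! :=
  div_mul_cancel₀ _ (prod_pos fun j _ => by positivity).ne'

lemma prod_range_succ_eq_GammaSeq {a b c d : ℝ} (ha : 0 < a) (hb : 0 < b) (hc : 0 < c)
    (hd : 0 < d) (habcd : a + b = c + d) {n : ℕ} (hn : n ≠ 0) :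
    ∏ p ∈ range (n + 1), (a + p) * (b + p) / ((c + p) * (d + p)) =
      GammaSeq c n * GammaSeq d n / (GammaSeq a n * GammaSeq b n) := by
  have hGa := GammaSeq_mul_prod_range ha n
  have hGb := GammaSeq_mul_prod_range hb n
  have hGc := GammaSeq_mul_prod_range hc n
  have hGd := GammaSeq_mul_prod_range hd n
  have hpow : (n : ℝ) ^ a * n ^ b = n ^ c * n ^ d := by
    rw [← rpow_add (by positivity), ← rpow_add (by positivity), habcd]
  have hP : ∀ {s : ℝ}, 0 < s → ∏ j ∈ range (n + 1), (s + j) ≠ 0 :=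
    fun hs => (prod_pos fun j _ => by positivity).ne'
  have hG : ∀ {s : ℝ}, 0 < s → GammaSeq s n ≠ 0 := fun hs =>
    div_ne_zero (mul_ne_zero (rpow_pos_of_pos (by positivity) _).ne' (by positivity)) (hP hs)
  simp only [prod_div_distrib, prod_mul_distrib]
  rw [div_eq_div_iff (mul_ne_zero (hP hc) (hP hd)) (mul_ne_zero (hG ha) (hG hb))]
  linear_combination (GammaSeq b n * ∏ j ∈ range (n + 1), (b + j)) * hGa
    + ((n : ℝ) ^ a * n !) * hGb - (GammaSeq d n * ∏ j ∈ range (n + 1), (d + j)) * hGc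
    - ((n : ℝ) ^ c * n !) * hGd + ((n ! : ℝ) ^ 2) * hpow

lemma tendsto_prod_range_div_Gamma {a b c d : ℝ} (ha : 0 < a) (hb : 0 < b) (hc : 0 < c)
    (hd : 0 < d) (habcd : a + b = c + d) :
    Tendsto (fun n => ∏ p ∈ range n, (a + p) * (b + p) / ((c + p) * (d + p))) atTop
      (𝓝 (Gamma c * Gamma d / (Gamma a * Gamma b))) := by
  rw [← tendsto_add_atTop_iff_nat 1]
  have hlim := ((GammaSeq_tendsto_Gamma c).mul (GammaSeq_tendsto_Gamma d)).div
    ((GammaSeq_tendsto_Gamma a).mul (GammaSeq_tendsto_Gamma b))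
    (mul_pos (Gamma_pos_of_pos ha) (Gamma_pos_of_pos hb)).ne'
  refine hlim.congr' ?_
  filter_upwards [eventually_ne_atTop 0] with n hn
  exact (prod_range_succ_eq_GammaSeq ha hb hc hd habcd hn).symm

end Real

/-- With `W(λ) = ∏_{p≥1}(1 − λ/((p+2ν)(p+2ν+1)))` and `N = 2ν` a
nonnegative integer, the product converges (absolutely) for every `λ ≥ 0`, and
`W(k(k+1)) = Γ(2ν+1)Γ(2ν+2)/(Γ(2ν−k+1)Γ(2ν+k+2))` for every integer `0 ≤ k ≤ 2ν`. -/
theorem berezin_multiplier_sphere (N : ℕ) :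
    (∀ lam : ℝ, 0 ≤ lam → Multipliable (fun p : ℕ =>
      1 - lam / (((p : ℝ) + 1 + N) * ((p : ℝ) + 1 + N + 1)))) ∧
    (∀ k : ℕ, k ≤ N →
      (∏' p : ℕ, (1 - ((k : ℝ) * (k + 1)) / (((p : ℝ) + 1 + N) * ((p : ℝ) + 1 + N + 1)))) =
        Real.Gamma ((N : ℝ) + 1) * Real.Gamma ((N : ℝ) + 2) /
          (Real.Gamma ((N : ℝ) - k + 1) * Real.Gamma ((N : ℝ) + k + 2))) := by
  have hmult (lam : ℝ) : Multipliable fun p : ℕ =>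
      1 - lam / (((p : ℝ) + 1 + N) * ((p : ℝ) + 1 + N + 1)) := by
    simpa only [add_assoc] using
      multipliable_one_sub_div_mul_add_one lam (c := 1 + N) (by positivity)
  refine ⟨fun lam _ => hmult lam, fun k hk => ?_⟩
  have hkN : (k : ℝ) ≤ N := Nat.cast_le.mpr hk
  have hfactor (p : ℕ) : 1 - ((k : ℝ) * (k + 1)) / (((p : ℝ) + 1 + N) * ((p : ℝ) + 1 + N + 1)) =
      ((N - k + 1) + p) * ((N + k + 2) + p) / (((N + 1) + p) * ((N + 2) + p)) := by
    field_simp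
    ring
  have hpartial := (hmult ((k : ℝ) * (k + 1))).hasProd.tendsto_prod_nat
  simp only [hfactor] at hpartial ⊢
  exact tendsto_nhds_unique hpartial
    (tendsto_prod_range_div_Gamma (by linarith) (by positivity) (by positivity) (by positivity)
      (by ring))
end
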